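/- arXiv:math/0608036 — 2 statements merged into one kernel-verified Lean document; each statement's English description precedes it below -/
import Mathlib

section
/- If the RWRE (X_n) is recurrent, then there exists a constant c₁₀ > 0 such that for every n ≥ 1, ϱ_n ≥ (c₁₀/n) · exp(−min_{x∈𝕋_n} V̄(x)). -/
open MeasureTheory ProbabilityTheory Filter
open scoped ENNReal NNReal

noncomputable section

namespace RWRE

/-- Vertices of the rooted `b`-ary tree `𝕋`: a vertex is a (finite) list of child
indices; the root `e` is `[]`, the children of `x` are the `i :: x` for `i : Fin b`,
the parent `x⃖` of a vertex `x ≠ ([] : Vertex b)` is `x.tail`, and the generation `|x|` is `x.length`. -/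
abbrev Vertex (b : ℕ) := List (Fin b)

instance (b : ℕ) : MeasurableSpace (Vertex b) := ⊤

/-- `x` and `y` are neighbours in the tree. -/
def adj {b : ℕ} (x y : Vertex b) : Prop :=
  (∃ i : Fin b, y = i :: x) ∨ (∃ i : Fin b, x = i :: y)

/-- The setting of Hu–Shi, "Slow movement of random walk in random environment on a
regular tree".  Under a probability `P` on `Ω` we are given:

* a random environment `env ω` on the `b`-ary tree: nonnegative, supported on
  neighbouring pairs, summing to `1` at each vertex, elliptic (`≥ ε0` on edges), with
  the vectors `(env · x ·)` for `x ≠ e` i.i.d. and non-degenerate (common law `μenv`);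
* the variables `A ω x = env ω x⃖ x / env ω x⃖ x⃖⃖` for `|x| ≥ 2`, extended to `|x| = 1`
  by an independent copy, so that all `A ω x` (for `x ≠ e`) have the common law `μA`
  and the vectors `(A ω (i :: x))ᵢ`, indexed by `x`, are i.i.d. with common law `μvec`;
* for each `ω` and each starting vertex `x0`, the quenched law `Pw ω x0` of the Markov
  chain on the tree with transition probabilities `env ω`, as a probability measure on
  the path space `ℕ → Vertex b`, characterised by its cylinder probabilities. -/
structure Setup (b : ℕ) (Ω : Type*) [MeasurableSpace Ω] (P : Measure Ω) where
  env : Ω → Vertex b → Vertex b → ℝ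
  A : Ω → Vertex b → ℝ
  μA : Measure ℝ
  μenv : Measure (ℝ × (Fin b → ℝ))
  μvec : Measure (Fin b → ℝ)
  Pw : Ω → Vertex b → Measure (ℕ → Vertex b)
  ε0 : ℝ
  ε0_pos : 0 < ε0
  env_nonneg : ∀ ω x y, 0 ≤ env ω x y
  env_zero : ∀ ω x y, ¬ adj x y → env ω x y = 0
  env_elliptic : ∀ ω x y, adj x y → ε0 ≤ env ω x y
  env_sum_root : ∀ ω, (∑ i : Fin b, env ω ([] : Vertex b) ([i])) = 1
  env_sum : ∀ ω (x : Vertex b), x ≠ ([] : Vertex b) →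
      env ω x x.tail + (∑ i : Fin b, env ω x (i :: x)) = 1
  env_meas : ∀ x y, Measurable fun ω => env ω x y
  env_law : ∀ x : Vertex b, x ≠ ([] : Vertex b) →
      Measure.map (fun ω => (env ω x x.tail, fun i : Fin b => env ω x (i :: x))) P = μenv
  env_indep : iIndepFun
      (m := fun _ : {x : Vertex b // x ≠ ([] : Vertex b)} => (inferInstance : MeasurableSpace (ℝ × (Fin b → ℝ))))
      (fun x ω => (env ω x.1 x.1.tail, fun i : Fin b => env ω x.1 (i :: x.1))) P
  env_nondeg : ∀ v : ℝ × (Fin b → ℝ), μenv ≠ Measure.dirac v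
  A_meas : ∀ x, Measurable fun ω => A ω x
  A_def : ∀ ω (i : Fin b) (z : Vertex b), z ≠ [] →
      A ω (i :: z) = env ω z (i :: z) / env ω z z.tail
  A_bdd : ∀ ω (x : Vertex b), x ≠ ([] : Vertex b) → A ω x ∈ Set.Icc ε0 (1 / ε0)
  A_law : ∀ x : Vertex b, x ≠ ([] : Vertex b) → Measure.map (fun ω => A ω x) P = μA
  A_nondeg : ∀ c : ℝ, μA ≠ Measure.dirac c
  Avec_law : ∀ x : Vertex b, Measure.map (fun ω (i : Fin b) => A ω (i :: x)) P = μvec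
  Avec_indep : iIndepFun (m := fun _ : Vertex b => (inferInstance : MeasurableSpace (Fin b → ℝ)))
      (fun (x : Vertex b) (ω : Ω) (i : Fin b) => A ω (i :: x)) P
  Pw_prob : ∀ ω x, IsProbabilityMeasure (Pw ω x)
  Pw_meas : ∀ x, Measurable fun ω => Pw ω x
  Pw_cyl : ∀ ω (x0 : Vertex b) (n : ℕ) (x : ℕ → Vertex b),
      Pw ω x0 {f | ∀ k ≤ n, f k = x k}
        = ENNReal.ofReal ((if x 0 = x0 then (1 : ℝ) else 0)
            * ∏ k ∈ Finset.range n, env ω (x k) (x (k + 1)))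

variable {b : ℕ} {Ω : Type*} [MeasurableSpace Ω] {P : Measure Ω}

/-- `ψ(t) = log 𝐄(A^t)`. -/
def Setup.psi (S : Setup b Ω P) (t : ℝ) : ℝ := Real.log (∫ a, a ^ t ∂S.μA)

/-- `p = inf_{t ∈ [0,1]} 𝐄(A^t)`. -/
def Setup.pcrit (S : Setup b Ω P) : ℝ := ⨅ t : Set.Icc (0 : ℝ) 1, ∫ a, a ^ (t : ℝ) ∂S.μA

/-- The branching random walk `V`: `V(e) = 0` and `V(x) = -∑_{z ∈ ]]e,x]]} log A(z)`,
the vertices of `]]e,x]]` being `x.drop k` for `k < x.length`. -/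
def Setup.V (S : Setup b Ω P) (ω : Ω) (x : Vertex b) : ℝ :=
  - ∑ k ∈ Finset.range x.length, Real.log (S.A ω (x.drop k))

/-- `V̄(x) = max_{z ∈ ]]e,x]]} V(z)`. -/
def Setup.Vbar (S : Setup b Ω P) (ω : Ω) (x : Vertex b) : ℝ :=
  ⨆ k : Fin x.length, S.V ω (x.drop (k : ℕ))

/-- `min_{x ∈ 𝕋_n} V̄(x)` (every vertex of generation `n` is `List.ofFn g` for a
unique `g : Fin n → Fin b`). -/
def Setup.minVbar (S : Setup b Ω P) (ω : Ω) (n : ℕ) : ℝ :=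
  ⨅ g : Fin n → Fin b, S.Vbar ω (List.ofFn g)

/-- `B(x) = ∏_{y ∈ ]]e,x]]} A(y)`. -/
def Setup.B (S : Setup b Ω P) (ω : Ω) (x : Vertex b) : ℝ :=
  ∏ k ∈ Finset.range x.length, S.A ω (x.drop k)

/-- The additive martingale `M_n = ∑_{x ∈ 𝕋_n} B(x)`. -/
def Setup.M (S : Setup b Ω P) (ω : Ω) (n : ℕ) : ℝ :=
  ∑ g : Fin n → Fin b, S.B ω (List.ofFn g)

/-- The event `{τ_n < τ_0}`: the walk makes an excursion (away from the root) reaching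
level `n` before returning to the root. -/
def rhoEvent (b n : ℕ) : Set (ℕ → Vertex b) :=
  {f | ∃ i : ℕ, 1 ≤ i ∧ (f i).length = n ∧ ∀ j : ℕ, 1 ≤ j → j ≤ i → f j ≠ []}

/-- `ϱ_n = P_ω{τ_n < τ_0}`, for the walk started at the root. -/
def Setup.rho (S : Setup b Ω P) (ω : Ω) (n : ℕ) : ℝ :=
  (S.Pw ω ([] : Vertex b) (rhoEvent b n)).toReal

/-- The event `{τ_n ≤ m}`: the walk reaches level `n` within `m` steps. -/
def hitEvent (b n m : ℕ) : Set (ℕ → Vertex b) :=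
  {f | ∃ i : ℕ, 1 ≤ i ∧ i ≤ m ∧ (f i).length = n}

/-- `τ_n`, as an extended real (so `∞` if level `n` is never reached). -/
def tauE (b n : ℕ) (f : ℕ → Vertex b) : ℝ≥0∞ :=
  sInf {t : ℝ≥0∞ | ∃ i : ℕ, t = i ∧ 1 ≤ i ∧ (f i).length = n}

/-- `X_n^* = max_{0 ≤ k ≤ n} |X_k|`. -/
def Xstar (b : ℕ) (f : ℕ → Vertex b) (n : ℕ) : ℕ :=
  (Finset.range (n + 1)).sup fun k => (f k).length

/-- The annealed law `ℙ = ∫ P_ω 𝐏(dω)` of the walk (started at the root). -/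
def Setup.annealed (S : Setup b Ω P) : Measure (ℕ → Vertex b) :=
  P.bind fun ω => S.Pw ω ([] : Vertex b)

/-- The walk is recurrent: almost surely, it returns to the root infinitely often. -/
def Setup.Recurrent (S : Setup b Ω P) : Prop :=
  ∀ᵐ ω ∂P, S.Pw ω ([] : Vertex b) {f | ∀ N : ℕ, ∃ i ≥ N, f i = ([] : Vertex b)} = 1

/-- The law of the step `S_1` of the random walk associated to the branching random
walk via `𝐄[g(S_1)] = b 𝐄[A g(log A)]`. -/
def Setup.stepLaw (S : Setup b Ω P) : Measure ℝ :=
  (b : ℝ≥0∞) • Measure.map Real.log (S.μA.withDensity fun a => ENNReal.ofReal a)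

/-- `β_n(x) = P_ω{starting from x, the walk hits 𝕋_n before hitting x⃖}`. -/
def Setup.betaP (S : Setup b Ω P) (ω : Ω) (n : ℕ) (x : Vertex b) : ℝ :=
  (S.Pw ω x {f | ∃ i : ℕ, (f i).length = n ∧ ∀ j ≤ i, f j ≠ x.tail}).toReal

/-- `β_n(x)` defined by the recursion of Section 6 of the paper:
`β_n(x) = 1` for `|x| ≥ n`, and
`β_n(x) = (∑ᵢ A(xᵢ) β_n(xᵢ)) / (1 + ∑ᵢ A(xᵢ) β_n(xᵢ))` below level `n`. -/
def Setup.betaRec (S : Setup b Ω P) (ω : Ω) (n : ℕ) (x : Vertex b) : ℝ :=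
  if h : n ≤ x.length then 1
  else
    (∑ i : Fin b, S.A ω (i :: x) * S.betaRec ω n (i :: x)) /
      (1 + ∑ i : Fin b, S.A ω (i :: x) * S.betaRec ω n (i :: x))
termination_by n - x.length
decreasing_by all_goals (simp only [List.length_cons]; omega)

/-- `γ_n(x)` defined by the recursion of Section 6 of the paper:
`γ_n(x) = 0` for `|x| ≥ n`, and
`γ_n(x) = (1/ω(x,x⃖) + ∑ᵢ A(xᵢ) γ_n(xᵢ)) / (1 + ∑ᵢ A(xᵢ) β_n(xᵢ))` below level `n`. -/
def Setup.gammaRec (S : Setup b Ω P) (ω : Ω) (n : ℕ) (x : Vertex b) : ℝ :=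
  if h : n ≤ x.length then 0
  else
    (1 / S.env ω x x.tail + ∑ i : Fin b, S.A ω (i :: x) * S.gammaRec ω n (i :: x)) /
      (1 + ∑ i : Fin b, S.A ω (i :: x) * S.betaRec ω n (i :: x))
termination_by n - x.length
decreasing_by all_goals (simp only [List.length_cons]; omega)

/-- `ϱ_n = ∑ᵢ ω(e,eᵢ) β_n(eᵢ)` (with `β_n` given by the recursion). -/
def Setup.rhoRec (S : Setup b Ω P) (ω : Ω) (n : ℕ) : ℝ :=
  ∑ i : Fin b, S.env ω ([] : Vertex b) ([i]) * S.betaRec ω n ([i])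

/-- `γ_n(e) = ∑ᵢ ω(e,eᵢ) γ_n(eᵢ)`. -/
def Setup.gammaRoot (S : Setup b Ω P) (ω : Ω) (n : ℕ) : ℝ :=
  ∑ i : Fin b, S.env ω ([] : Vertex b) ([i]) * S.gammaRec ω n ([i])

open scoped Classical in
/-- `#E_m` where `E_m = {x ∈ 𝕋_m : max_{z ∈ ]]e,x]]} |V(z)| ≤ m^{1/3}}`. -/
def Setup.Ecount (S : Setup b Ω P) (ω : Ω) (m : ℕ) : ℕ :=
  (Finset.univ.filter fun g : Fin m → Fin b =>
      ∀ k : Fin m, |S.V ω ((List.ofFn g).drop (k : ℕ))| ≤ (m : ℝ) ^ ((1 : ℝ) / 3)).card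


/-!
Let `x` be a vertex of generation `n` minimising `V̄`, with ancestors `x₀ = e, x₁, …, xₙ = x`.
Watched along this ray, the walk is a birth-and-death chain whose scale function `s`
(`s(x₀) = 0`, `s(xₙ) = 1`) has increments proportional to `ρⱼ = e^{V(x_{j+1}) - V(x₁)}`.
Extended to the tree so as to be constant on every subtree leaving the ray, `s` is subharmonic for
the walk killed at `e` and at level `n`, hence `s(z) ≤ P_z{τ_n < τ_0}`. Therefore
`ϱ_n ≥ ω(e, x₁) s(x₁) ≥ ε₀ / ∑_{j<n} ρⱼ ≥ ε₀² e^{-V̄(x)} / n`.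
The comparison with the hitting probability is made at finite horizons: up to time `t`, `s` is
bounded by the probability of escaping within `t` steps plus the mass not yet absorbed, and the
latter decays geometrically because from any vertex the straight descent to level `n` has
probability at least `ε₀ⁿ`.
-/

section TreeKernel

variable {b : ℕ}

/-- At the root, `[].tail = []` contributes the junk term `E [] [] * f []`. -/
def transOp (E : Vertex b → Vertex b → ℝ) (f : Vertex b → ℝ) (v : Vertex b) : ℝ :=
  E v v.tail * f v.tail + ∑ i : Fin b, E v (i :: v) * f (i :: v)

lemma transOp_const_mul (E : Vertex b → Vertex b → ℝ) (c : ℝ) (f : Vertex b → ℝ)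
    (v : Vertex b) : transOp E (fun y => c * f y) v = c * transOp E f v := by
  simp only [transOp, mul_add, Finset.mul_sum, mul_left_comm]

lemma transOp_add (E : Vertex b → Vertex b → ℝ) (f g : Vertex b → ℝ) (v : Vertex b) :
    transOp E (fun y => f y + g y) v = transOp E f v + transOp E g v := by
  simp only [transOp, mul_add, Finset.sum_add_distrib]
  ring

structure IsEllipticKernel (E : Vertex b → Vertex b → ℝ) (ε : ℝ) : Prop where
  pos : 0 < ε
  nonneg : ∀ v y, 0 ≤ E v y
  sum_root : ∑ i : Fin b, E [] [i] = 1
  sum_eq_one : ∀ v : Vertex b, v ≠ [] → E v v.tail + ∑ i : Fin b, E v (i :: v) = 1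
  le_child : ∀ v (i : Fin b), ε ≤ E v (i :: v)
  le_parent : ∀ v : Vertex b, v ≠ [] → ε ≤ E v v.tail

namespace IsEllipticKernel

variable {E : Vertex b → Vertex b → ℝ} {ε : ℝ}

lemma b_pos (hE : IsEllipticKernel E ε) : 0 < b := by
  by_contra! hb
  obtain rfl : b = 0 := by omega
  simpa using hE.sum_root

lemma le_one (hE : IsEllipticKernel E ε) : ε ≤ 1 := by
  set v : Vertex b := [⟨0, hE.b_pos⟩]
  have hv : v ≠ [] := List.cons_ne_nil _ _
  have := hE.sum_eq_one v hv
  have := Finset.sum_nonneg fun i (_ : i ∈ Finset.univ) => hE.nonneg v (i :: v)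
  linarith [hE.le_parent v hv]

lemma transOp_mono (hE : IsEllipticKernel E ε) {f g : Vertex b → ℝ} (h : ∀ y, f y ≤ g y)
    (v : Vertex b) : transOp E f v ≤ transOp E g v := by
  unfold transOp
  gcongr with i
  · exact hE.nonneg _ _
  · exact h _
  · exact hE.nonneg _ _
  · exact h _

lemma transOp_nonneg (hE : IsEllipticKernel E ε) {f : Vertex b → ℝ} (hf : ∀ y, 0 ≤ f y)
    (v : Vertex b) : 0 ≤ transOp E f v :=
  add_nonneg (mul_nonneg (hE.nonneg _ _) (hf _))
    (Finset.sum_nonneg fun _ _ => mul_nonneg (hE.nonneg _ _) (hf _))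

lemma transOp_const (hE : IsEllipticKernel E ε) {v : Vertex b} (hv : v ≠ []) (c : ℝ) :
    transOp E (fun _ => c) v = c := by
  rw [transOp, ← Finset.sum_mul, ← add_mul, hE.sum_eq_one v hv, one_mul]

lemma transOp_const_sub (hE : IsEllipticKernel E ε) {v : Vertex b} (hv : v ≠ [])
    (c : ℝ) (f : Vertex b → ℝ) : transOp E (fun y => c - f y) v = c - transOp E f v := by
  have := transOp_add E (fun _ => c) (fun y => -1 * f y) v
  rw [transOp_const_mul, hE.transOp_const hv] at this
  simpa [← sub_eq_add_neg] using this

lemma le_transOp (hE : IsEllipticKernel E ε) {v : Vertex b} (hv : v ≠ [])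
    {f : Vertex b → ℝ} {c : ℝ} (hp : c ≤ f v.tail) (hc : ∀ i, c ≤ f (i :: v)) :
    c ≤ transOp E f v := by
  have h := hE.transOp_const_sub hv c f
  have : transOp E (fun y => c - f y) v ≤ 0 :=
    add_nonpos (mul_nonpos_of_nonneg_of_nonpos (hE.nonneg _ _) (by linarith))
      (Finset.sum_nonpos fun i _ => mul_nonpos_of_nonneg_of_nonpos (hE.nonneg _ _)
        (by linarith [hc i]))
  linarith

lemma transOp_le_one_sub (hE : IsEllipticKernel E ε) {v : Vertex b} (hv : v ≠ [])
    {f : Vertex b → ℝ} (hf : ∀ y, f y ≤ 1) (i : Fin b) :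
    transOp E f v ≤ 1 - E v (i :: v) * (1 - f (i :: v)) := by
  have key : E v (i :: v) * (1 - f (i :: v)) ≤ transOp E (fun y => 1 - f y) v := by
    refine le_add_of_nonneg_of_le (mul_nonneg (hE.nonneg _ _) (sub_nonneg.2 (hf _))) ?_
    exact Finset.single_le_sum (f := fun j : Fin b => E v (j :: v) * (1 - f (j :: v)))
      (fun j _ => mul_nonneg (hE.nonneg _ _) (sub_nonneg.2 (hf _))) (Finset.mem_univ i)
  rw [hE.transOp_const_sub hv] at key
  linarith

end IsEllipticKernel

end TreeKernel

section KilledWalk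

variable {b : ℕ} (E : Vertex b → Vertex b → ℝ) (n : ℕ)

def survivalProb : ℕ → Vertex b → ℝ
  | 0, v => if v = [] ∨ n ≤ v.length then 0 else 1
  | t + 1, v => if v = [] ∨ n ≤ v.length then 0 else transOp E (survivalProb t) v

/-- The probability of reaching level `n` within `t` steps without visiting the root at a positive
time: the root is masked in the recursion, not at the start. -/
def escapeProb : ℕ → Vertex b → ℝ
  | 0, v => if n ≤ v.length then 1 else 0
  | t + 1, v => if n ≤ v.length then 1 else
      transOp E (fun y => if y = [] then 0 else escapeProb t y) v

variable {E n} {ε : ℝ}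

lemma survivalProb_of_killed {v : Vertex b} (hv : v = [] ∨ n ≤ v.length) (t : ℕ) :
    survivalProb E n t v = 0 := by
  cases t <;> simp [survivalProb, hv]

lemma survivalProb_succ {v : Vertex b} (hv : ¬(v = [] ∨ n ≤ v.length)) (t : ℕ) :
    survivalProb E n (t + 1) v = transOp E (survivalProb E n t) v := by
  simp [survivalProb, hv]

namespace IsEllipticKernel

variable (hE : IsEllipticKernel E ε)
include hE

lemma survivalProb_mem_Icc (t : ℕ) (v : Vertex b) : survivalProb E n t v ∈ Set.Icc 0 1 := by
  induction t generalizing v with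
  | zero => by_cases hv : v = [] ∨ n ≤ v.length <;> simp [survivalProb, hv]
  | succ t ih =>
    by_cases hv : v = [] ∨ n ≤ v.length
    · simp [survivalProb_of_killed hv]
    · have hv' : v ≠ [] := fun h => hv (Or.inl h)
      rw [survivalProb_succ hv]
      exact ⟨hE.le_transOp hv' (ih _).1 fun i => (ih _).1,
        hE.transOp_const hv' 1 ▸ hE.transOp_mono (fun y => (ih y).2) v⟩

/-- The straight descent from `v` to level `n` has probability at least `ε ^ (n - |v|)`. -/
lemma survivalProb_le_one_sub_pow {t : ℕ} {v : Vertex b} (ht : n ≤ v.length + t) :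
    survivalProb E n t v ≤ 1 - ε ^ (n - v.length) := by
  induction t generalizing v with
  | zero =>
    rw [survivalProb_of_killed (Or.inr (by omega))]
    simp [show n - v.length = 0 by omega]
  | succ t ih =>
    by_cases hv : v = [] ∨ n ≤ v.length
    · rw [survivalProb_of_killed hv, sub_nonneg]
      exact pow_le_one₀ hE.pos.le hE.le_one
    · have hv' : v ≠ [] := fun h => hv (Or.inl h)
      let i : Fin b := ⟨0, hE.b_pos⟩
      have hchild := ih (v := i :: v) (by simp; omega)
      rw [survivalProb_succ hv]
      refine (hE.transOp_le_one_sub hv' (fun y => (hE.survivalProb_mem_Icc t y).2) i).trans ?_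
      have hpow : ε ^ (n - v.length) = ε * ε ^ (n - (i :: v).length) := by
        rw [← pow_succ']; congr 1; simp; omega
      rw [hpow]
      have := mul_le_mul (hE.le_child v i) (le_sub_comm.1 hchild)
        (pow_nonneg hE.pos.le _) (hE.nonneg _ _)
      linarith

lemma survivalProb_le_uniform (v : Vertex b) : survivalProb E n n v ≤ 1 - ε ^ n := by
  refine (hE.survivalProb_le_one_sub_pow (by omega)).trans ?_
  exact sub_le_sub_left (pow_le_pow_of_le_one hE.pos.le hE.le_one (Nat.sub_le _ _)) 1

lemma survivalProb_add_le {c : ℝ} {t : ℕ} (h : ∀ y, survivalProb E n t y ≤ c)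
    (s : ℕ) (v : Vertex b) : survivalProb E n (s + t) v ≤ c * survivalProb E n s v := by
  induction s generalizing v with
  | zero =>
    by_cases hv : v = [] ∨ n ≤ v.length
    · simp [survivalProb_of_killed hv]
    · simpa [survivalProb, hv] using h v
  | succ s ih =>
    by_cases hv : v = [] ∨ n ≤ v.length
    · simp [survivalProb_of_killed hv]
    · rw [Nat.add_right_comm, survivalProb_succ hv, survivalProb_succ hv,
        ← transOp_const_mul]
      exact hE.transOp_mono ih v

lemma survivalProb_mul_le (m : ℕ) (v : Vertex b) :
    survivalProb E n (m * n) v ≤ (1 - ε ^ n) ^ m := by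
  have hδ : 0 ≤ 1 - ε ^ n := sub_nonneg.2 (pow_le_one₀ hE.pos.le hE.le_one)
  induction m generalizing v with
  | zero => simpa using (hE.survivalProb_mem_Icc 0 v).2
  | succ m ih =>
    calc survivalProb E n ((m + 1) * n) v
        ≤ (1 - ε ^ n) ^ m * survivalProb E n n v := by
          rw [add_mul, one_mul, add_comm]
          exact hE.survivalProb_add_le ih n v
      _ ≤ (1 - ε ^ n) ^ (m + 1) := by
          rw [pow_succ]
          exact mul_le_mul_of_nonneg_left (hE.survivalProb_le_uniform v) (pow_nonneg hδ m)

lemma escapeProb_nonneg (t : ℕ) (v : Vertex b) : 0 ≤ escapeProb E n t v := by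
  induction t generalizing v with
  | zero => unfold escapeProb; split_ifs <;> norm_num
  | succ t ih =>
    unfold escapeProb
    split_ifs
    · norm_num
    · exact hE.transOp_nonneg (fun y => by split_ifs <;> simp [ih]) v

end IsEllipticKernel

end KilledWalk

section Ray

variable {α : Type*} {r : List α} {k : ℕ}

-- For a vertex `r`, `r.rtake k` is its ancestor in generation `k`.

lemma length_rtake_of_le (hk : k ≤ r.length) : (r.rtake k).length = k := by
  simp [List.rtake]; omega

lemma rtake_succ (hk : k < r.length) :
    r.rtake (k + 1) = r[r.length - k - 1] :: r.rtake k := by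
  rw [List.rtake, List.rtake, List.drop_eq_getElem_cons (by omega)]
  congr 2; omega

lemma rtake_ne_nil (hk : k + 1 ≤ r.length) : r.rtake (k + 1) ≠ [] := by
  rw [rtake_succ (by omega)]
  exact List.cons_ne_nil _ _

lemma tail_rtake (hk : k ≤ r.length) : (r.rtake k).tail = r.rtake (k - 1) := by
  rcases k with _ | k
  · simp
  · rw [rtake_succ (by omega)]
    rfl

lemma drop_rtake (hk : k ≤ r.length) {j : ℕ} (hj : j ≤ k) :
    (r.rtake k).drop j = r.rtake (k - j) := by
  rw [List.rtake, List.rtake, List.drop_drop]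
  congr 1; omega

end Ray

section RayScale

variable {b : ℕ} (E : Vertex b → Vertex b → ℝ) (r : Vertex b)

def rayRatio (j : ℕ) : ℝ :=
  ∏ l ∈ Finset.range j, E (r.rtake (l + 1)) (r.rtake l) / E (r.rtake (l + 1)) (r.rtake (l + 2))

/-- `rayScale E r k` is the probability that the birth-and-death chain along the ray to `r`, with
the up and down probabilities of `E`, reaches `r` before the root when started from
`r.rtake k`. -/
def rayScale (k : ℕ) : ℝ :=
  (∑ j ∈ Finset.range k, rayRatio E r j) / ∑ j ∈ Finset.range r.length, rayRatio E r j

/-- The generation of the last vertex of the ray on the path from the root to `v`. -/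
def rayDepth (v : Vertex b) : ℕ := Nat.findGreatest (fun k => r.rtake k <:+ v) r.length

def rayScaleExt (v : Vertex b) : ℝ :=
  if r.length ≤ v.length then 1 else rayScale E r (rayDepth r v)

variable {E r} {ε : ℝ} {k : ℕ} {v : Vertex b}

lemma rayRatio_succ (k : ℕ) : rayRatio E r (k + 1) = rayRatio E r k *
    (E (r.rtake (k + 1)) (r.rtake k) / E (r.rtake (k + 1)) (r.rtake (k + 2))) :=
  Finset.prod_range_succ _ _

lemma rayScale_zero : rayScale E r 0 = 0 := by simp [rayScale]

lemma rayScale_succ (k : ℕ) : rayScale E r (k + 1) =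
    rayScale E r k + rayRatio E r k / ∑ j ∈ Finset.range r.length, rayRatio E r j := by
  rw [rayScale, rayScale, Finset.sum_range_succ, add_div]

lemma rayDepth_le (v : Vertex b) : rayDepth r v ≤ r.length := Nat.findGreatest_le _

lemma rtake_rayDepth_suffix (v : Vertex b) : r.rtake (rayDepth r v) <:+ v :=
  Nat.findGreatest_spec (P := fun k => r.rtake k <:+ v) (Nat.zero_le _) (by simp)

lemma le_rayDepth (hk : k ≤ r.length) (h : r.rtake k <:+ v) : k ≤ rayDepth r v :=
  Nat.le_findGreatest hk h

lemma rayDepth_le_length (v : Vertex b) : rayDepth r v ≤ v.length := by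
  simpa [length_rtake_of_le (rayDepth_le v)] using (rtake_rayDepth_suffix (r := r) v).length_le

lemma rayDepth_rtake (hk : k ≤ r.length) : rayDepth r (r.rtake k) = k :=
  le_antisymm ((rayDepth_le_length _).trans (length_rtake_of_le hk).le)
    (le_rayDepth hk List.suffix_rfl)

lemma rayScaleExt_nil (hr : 1 ≤ r.length) : rayScaleExt E r [] = 0 := by
  have h0 : rayDepth r [] = 0 := Nat.le_zero.1 (rayDepth_le_length [])
  simp [rayScaleExt, show ¬ r.length ≤ 0 by omega, h0, rayScale_zero]

namespace IsEllipticKernel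

variable (hE : IsEllipticKernel E ε)
include hE

lemma rayRatio_nonneg (j : ℕ) : 0 ≤ rayRatio E r j :=
  Finset.prod_nonneg fun _ _ => div_nonneg (hE.nonneg _ _) (hE.nonneg _ _)

lemma sum_rayRatio_pos (hr : 1 ≤ r.length) :
    0 < ∑ j ∈ Finset.range r.length, rayRatio E r j :=
  Finset.sum_pos' (fun j _ => hE.rayRatio_nonneg j)
    ⟨0, Finset.mem_range.2 hr, by simp [rayRatio]⟩

lemma rayScale_mono (hr : 1 ≤ r.length) : Monotone (rayScale E r) := fun _ _ h =>
  div_le_div_of_nonneg_right (Finset.sum_le_sum_of_subset_of_nonneg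
    (Finset.range_subset_range.2 h) fun j _ _ => hE.rayRatio_nonneg j)
    (hE.sum_rayRatio_pos hr).le

lemma rayScale_length (hr : 1 ≤ r.length) : rayScale E r r.length = 1 :=
  div_self (hE.sum_rayRatio_pos hr).ne'

lemma rayScale_mem_Icc (hr : 1 ≤ r.length) (hk : k ≤ r.length) :
    rayScale E r k ∈ Set.Icc 0 1 :=
  ⟨rayScale_zero (E := E) (r := r) ▸ hE.rayScale_mono hr (Nat.zero_le k),
    hE.rayScale_length hr ▸ hE.rayScale_mono hr hk⟩

lemma rayScale_harmonic (hk : 1 ≤ k) (hkr : k < r.length) :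
    E (r.rtake k) (r.rtake (k - 1)) * (rayScale E r k - rayScale E r (k - 1)) =
      E (r.rtake k) (r.rtake (k + 1)) * (rayScale E r (k + 1) - rayScale E r k) := by
  obtain ⟨k, rfl⟩ := Nat.exists_eq_add_of_le' hk
  have hp : 0 < E (r.rtake (k + 1)) (r.rtake (k + 2)) := by
    rw [rtake_succ (k := k + 1) (by omega)]
    exact hE.pos.trans_le (hE.le_child _ _)
  have hZ := hE.sum_rayRatio_pos (r := r) (by omega)
  rw [Nat.add_sub_cancel, rayScale_succ (k + 1), rayScale_succ k, rayRatio_succ]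
  field_simp
  ring

lemma rayScaleExt_rtake (hr : 1 ≤ r.length) (hk : k ≤ r.length) :
    rayScaleExt E r (r.rtake k) = rayScale E r k := by
  unfold rayScaleExt
  rw [length_rtake_of_le hk]
  split_ifs with h
  · rw [show k = r.length by omega, hE.rayScale_length hr]
  · rw [rayDepth_rtake hk]

lemma rayScale_le_rayScaleExt (hr : 1 ≤ r.length) (hk : k ≤ r.length)
    (h : r.rtake k <:+ v) : rayScale E r k ≤ rayScaleExt E r v := by
  unfold rayScaleExt
  split_ifs
  · exact (hE.rayScale_mem_Icc hr hk).2
  · exact hE.rayScale_mono hr (le_rayDepth hk h)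

lemma rayScaleExt_mem_Icc (hr : 1 ≤ r.length) (v : Vertex b) :
    rayScaleExt E r v ∈ Set.Icc 0 1 := by
  unfold rayScaleExt
  split_ifs
  · simp
  · exact hE.rayScale_mem_Icc hr (rayDepth_le v)

end IsEllipticKernel

end RayScale

section Comparison

variable {b : ℕ} {E : Vertex b → Vertex b → ℝ} {r : Vertex b} {ε : ℝ} {n : ℕ}

namespace IsEllipticKernel

variable (hE : IsEllipticKernel E ε)
include hE

lemma rayScaleExt_le_transOp_of_lt {v : Vertex b} (hv : v ≠ []) (hvr : v.length < r.length)
    (hoff : rayDepth r v < v.length) : rayScaleExt E r v ≤ transOp E (rayScaleExt E r) v := by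
  have hr : 1 ≤ r.length := by omega
  have hsuff := rtake_rayDepth_suffix (r := r) v
  have hu : rayScaleExt E r v = rayScale E r (rayDepth r v) := if_neg (by omega)
  rw [hu]
  refine hE.le_transOp hv (hE.rayScale_le_rayScaleExt hr (rayDepth_le v) ?_)
    fun i => hE.rayScale_le_rayScaleExt hr (rayDepth_le v) (hsuff.trans (List.suffix_cons i v))
  obtain ⟨a, w, rfl⟩ := List.exists_cons_of_ne_nil hv
  refine (List.suffix_cons_iff.1 hsuff).resolve_left fun h => ?_
  have := congrArg List.length h
  rw [length_rtake_of_le (rayDepth_le _)] at this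
  omega

lemma rayScaleExt_rtake_le_transOp (hk : 1 ≤ k) (hkr : k < r.length) :
    rayScaleExt E r (r.rtake k) ≤ transOp E (rayScaleExt E r) (r.rtake k) := by
  have hr : 1 ≤ r.length := by omega
  have hv : r.rtake k ≠ [] := by
    obtain ⟨k, rfl⟩ := Nat.exists_eq_add_of_le' hk
    exact rtake_ne_nil hkr.le
  set i : Fin b := r[r.length - k - 1]
  have hchild : i :: r.rtake k = r.rtake (k + 1) := (rtake_succ hkr).symm
  rw [hE.rayScaleExt_rtake hr hkr.le, ← sub_nonpos, ← hE.transOp_const_sub hv, transOp,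
    tail_rtake hkr.le, hE.rayScaleExt_rtake hr (by omega),
    ← Finset.add_sum_erase _ _ (Finset.mem_univ i), hchild, hE.rayScaleExt_rtake hr hkr]
  have hrest : ∑ j ∈ Finset.univ.erase i, E (r.rtake k) (j :: r.rtake k) *
      (rayScale E r k - rayScaleExt E r (j :: r.rtake k)) ≤ 0 :=
    Finset.sum_nonpos fun j _ => mul_nonpos_of_nonneg_of_nonpos (hE.nonneg _ _)
      (sub_nonpos.2 (hE.rayScale_le_rayScaleExt hr hkr.le (List.suffix_cons j _)))
  have := hE.rayScale_harmonic hk hkr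
  linarith

lemma rayScaleExt_le_transOp {v : Vertex b} (hv : v ≠ []) (hvr : v.length < r.length) :
    rayScaleExt E r v ≤ transOp E (rayScaleExt E r) v := by
  rcases (rayDepth_le_length (r := r) v).lt_or_eq with hoff | hon
  · exact hE.rayScaleExt_le_transOp_of_lt hv hvr hoff
  · have hveq : r.rtake (rayDepth r v) = v := (rtake_rayDepth_suffix v).eq_of_length
      (by rw [length_rtake_of_le (rayDepth_le v), hon])
    have hk : 1 ≤ rayDepth r v := hon ▸ List.length_pos_iff.2 hv
    rw [← hveq]
    exact hE.rayScaleExt_rtake_le_transOp hk (by omega)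

/-- Optional stopping, at a finite horizon, for the subharmonic function `rayScaleExt`. -/
lemma rayScaleExt_le_escapeProb_add_survivalProb (hr : r.length = n) (hn : 1 ≤ n) (t : ℕ)
    (v : Vertex b) : rayScaleExt E r v ≤ escapeProb E n t v + survivalProb E n t v := by
  have hr1 : 1 ≤ r.length := hr ▸ hn
  induction t generalizing v with
  | zero =>
    by_cases hv : v = [] ∨ n ≤ v.length
    · rcases hv with rfl | hv
      · simp [rayScaleExt_nil hr1, escapeProb, survivalProb, show ¬ n ≤ 0 by omega]
      · simp [rayScaleExt, escapeProb, survivalProb, hv, hr]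
    · rw [escapeProb, survivalProb, if_neg (fun h => hv (Or.inr h)), if_neg hv, zero_add]
      exact (hE.rayScaleExt_mem_Icc hr1 v).2
  | succ t ih =>
    have hs := fun y => (hE.survivalProb_mem_Icc (n := n) t y).1
    by_cases hv : v = [] ∨ n ≤ v.length
    · rcases hv with rfl | hv
      · rw [rayScaleExt_nil hr1]
        exact add_nonneg (hE.escapeProb_nonneg _ _) (hE.survivalProb_mem_Icc _ _).1
      · simp [rayScaleExt, escapeProb, survivalProb, hv, hr]
    · have hv' : v ≠ [] := fun h => hv (Or.inl h)
      have hvn : ¬ n ≤ v.length := fun h => hv (Or.inr h)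
      rw [escapeProb, if_neg hvn, survivalProb_succ hv, ← transOp_add]
      refine (hE.rayScaleExt_le_transOp hv' (by omega)).trans (hE.transOp_mono (fun y => ?_) v)
      split_ifs with hy
      · simpa [hy, rayScaleExt_nil hr1] using hs []
      · exact ih y

end IsEllipticKernel

end Comparison

section Paths

variable {b : ℕ} {n t : ℕ} {v : Vertex b} {p p' : List (Vertex b)}

def neighbors (v : Vertex b) : Finset (Vertex b) :=
  insert v.tail (Finset.univ.image (· :: v))

lemma sum_neighbors (E : Vertex b → Vertex b → ℝ) (f : Vertex b → ℝ) (v : Vertex b) :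
    ∑ y ∈ neighbors v, E v y * f y = transOp E f v := by
  have htail : v.tail ∉ Finset.univ.image (· :: v) := by
    simp only [Finset.mem_image, not_exists, not_and]
    intro i _ h
    have := congrArg List.length h
    simp at this
    omega
  rw [neighbors, Finset.sum_insert htail,
    Finset.sum_image fun _ _ _ _ h => List.head_eq_of_cons_eq h]
  rfl

variable (n) in
def escapePaths : ℕ → Vertex b → Finset (List (Vertex b))
  | 0, v => if n ≤ v.length then {[v]} else ∅
  | t + 1, v => if n ≤ v.length then {[v]} else
      (neighbors v).biUnion fun y => if y = [] then ∅ else (escapePaths t y).image (v :: ·)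

lemma length_le_of_mem_neighbors {y : Vertex b} (hy : y ∈ neighbors v) :
    y.length ≤ v.length + 1 := by
  simp only [neighbors, Finset.mem_insert, Finset.mem_image, Finset.mem_univ, true_and] at hy
  rcases hy with rfl | ⟨i, rfl⟩
  · simp; omega
  · simp

lemma eq_singleton_of_mem_escapePaths_zero (hp : p ∈ escapePaths n 0 v) :
    n ≤ v.length ∧ p = [v] := by
  unfold escapePaths at hp
  split_ifs at hp with hv
  · exact ⟨hv, Finset.mem_singleton.1 hp⟩
  · simp at hp

lemma mem_escapePaths_succ (hp : p ∈ escapePaths n (t + 1) v) :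
    (n ≤ v.length ∧ p = [v]) ∨ (v.length < n ∧
      ∃ y ∈ neighbors v, y ≠ [] ∧ ∃ q ∈ escapePaths n t y, v :: q = p) := by
  unfold escapePaths at hp
  split_ifs at hp with hv
  · exact Or.inl ⟨hv, Finset.mem_singleton.1 hp⟩
  · refine Or.inr ⟨by omega, ?_⟩
    obtain ⟨y, hy, hp⟩ := Finset.mem_biUnion.1 hp
    split_ifs at hp with hy0
    · simp at hp
    · exact ⟨y, hy, hy0, Finset.mem_image.1 hp⟩

lemma exists_eq_cons_of_mem_escapePaths (hp : p ∈ escapePaths n t v) : ∃ q, p = v :: q := by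
  cases t with
  | zero => exact ⟨[], (eq_singleton_of_mem_escapePaths_zero hp).2⟩
  | succ t =>
    rcases mem_escapePaths_succ hp with ⟨_, rfl⟩ | ⟨_, _, _, _, q, _, rfl⟩
    exacts [⟨[], rfl⟩, ⟨q, rfl⟩]

lemma ne_nil_of_mem_escapePaths (hp : p ∈ escapePaths n t v) : p ≠ [] := by
  obtain ⟨q, rfl⟩ := exists_eq_cons_of_mem_escapePaths hp
  exact List.cons_ne_nil _ _

lemma ne_nil_of_mem_tail_of_mem_escapePaths (hp : p ∈ escapePaths n t v) :
    ∀ x ∈ p.tail, x ≠ [] := by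
  induction t generalizing v p with
  | zero => simp [(eq_singleton_of_mem_escapePaths_zero hp).2]
  | succ t ih =>
    rcases mem_escapePaths_succ hp with ⟨_, rfl⟩ | ⟨_, y, _, hy, q, hq, rfl⟩
    · simp
    · obtain ⟨q, rfl⟩ := exists_eq_cons_of_mem_escapePaths hq
      rintro x (_ | ⟨_, hx⟩)
      exacts [hy, ih hq x hx]

lemma length_getLast_of_mem_escapePaths (hp : p ∈ escapePaths n t v) (hv : v.length ≤ n) :
    (p.getLast (ne_nil_of_mem_escapePaths hp)).length = n := by
  induction t generalizing v p with
  | zero =>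
    obtain ⟨hnv, rfl⟩ := eq_singleton_of_mem_escapePaths_zero hp
    simp; omega
  | succ t ih =>
    rcases mem_escapePaths_succ hp with ⟨hnv, rfl⟩ | ⟨hvn, y, hy, _, q, hq, rfl⟩
    · simp; omega
    · rw [List.getLast_cons (ne_nil_of_mem_escapePaths hq)]
      exact ih hq (by have := length_le_of_mem_neighbors hy; omega)

lemma eq_of_prefix_of_mem_escapePaths (hp : p ∈ escapePaths n t v)
    (hp' : p' ∈ escapePaths n t v) (h : p <+: p') : p = p' := by
  induction t generalizing v p p' with
  | zero =>
    rw [(eq_singleton_of_mem_escapePaths_zero hp).2, (eq_singleton_of_mem_escapePaths_zero hp').2]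
  | succ t ih =>
    rcases mem_escapePaths_succ hp with ⟨_, rfl⟩ | ⟨hvn, y, _, _, q, hq, rfl⟩
    · rcases mem_escapePaths_succ hp' with ⟨_, rfl⟩ | ⟨hvn, -⟩
      · rfl
      · omega
    · rcases mem_escapePaths_succ hp' with ⟨hnv, -⟩ | ⟨-, y', _, _, q', hq', rfl⟩
      · omega
      · have hqq := List.cons_prefix_cons.1 h |>.2
        obtain ⟨q₁, rfl⟩ := exists_eq_cons_of_mem_escapePaths hq
        obtain ⟨q₁', rfl⟩ := exists_eq_cons_of_mem_escapePaths hq'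
        obtain rfl : y = y' := (List.cons_prefix_cons.1 hqq).1
        rw [ih hq hq' hqq]

end Paths

section PathMeasure

variable {b : ℕ} {E : Vertex b → Vertex b → ℝ} {ε : ℝ} {n t : ℕ}
  {p p' : List (Vertex b)}

variable (E) in
def pathWeight (p : List (Vertex b)) : ℝ :=
  ∏ k ∈ Finset.range (p.length - 1), E (p.getD k []) (p.getD (k + 1) [])

lemma pathWeight_singleton (v : Vertex b) : pathWeight E [v] = 1 := by simp [pathWeight]

lemma pathWeight_cons_cons (v y : Vertex b) (l : List (Vertex b)) :
    pathWeight E (v :: y :: l) = E v y * pathWeight E (y :: l) := by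
  simp only [pathWeight, List.length_cons, Nat.add_sub_cancel]
  rw [Finset.prod_range_succ']
  simp [mul_comm]

lemma IsEllipticKernel.pathWeight_nonneg (hE : IsEllipticKernel E ε) (p : List (Vertex b)) :
    0 ≤ pathWeight E p :=
  Finset.prod_nonneg fun _ _ => hE.nonneg _ _

lemma sum_pathWeight_escapePaths (t : ℕ) (v : Vertex b) :
    ∑ p ∈ escapePaths n t v, pathWeight E p = escapeProb E n t v := by
  induction t generalizing v with
  | zero =>
    unfold escapePaths escapeProb
    split_ifs <;> simp [pathWeight_singleton]
  | succ t ih =>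
    unfold escapePaths escapeProb
    split_ifs with hv
    · simp [pathWeight_singleton]
    rw [Finset.sum_biUnion, ← sum_neighbors]
    · refine Finset.sum_congr rfl fun y _ => ?_
      split_ifs with hy
      · simp
      · rw [Finset.sum_image fun _ _ _ _ h => List.cons_injective h, ← ih, Finset.mul_sum]
        refine Finset.sum_congr rfl fun q hq => ?_
        obtain ⟨q, rfl⟩ := exists_eq_cons_of_mem_escapePaths hq
        exact pathWeight_cons_cons _ _ _
    · intro y _ y' _ hne
      simp only [Function.onFun]
      split_ifs
      · exact Finset.disjoint_empty_left _
      · exact Finset.disjoint_empty_left _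
      · exact Finset.disjoint_empty_right _
      rw [Finset.disjoint_left]
      rintro _ hp hp'
      obtain ⟨q, hq, rfl⟩ := Finset.mem_image.1 hp
      obtain ⟨q', hq', hqq⟩ := Finset.mem_image.1 hp'
      obtain ⟨q, rfl⟩ := exists_eq_cons_of_mem_escapePaths hq
      obtain ⟨q', rfl⟩ := exists_eq_cons_of_mem_escapePaths hq'
      simp_all

variable (E) in
def IsMarkovChainLaw (x₀ : Vertex b) (μ : Measure (ℕ → Vertex b)) : Prop :=
  ∀ (N : ℕ) (x : ℕ → Vertex b), μ {f | ∀ k ≤ N, f k = x k} = ENNReal.ofReal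
    ((if x 0 = x₀ then (1 : ℝ) else 0) * ∏ k ∈ Finset.range N, E (x k) (x (k + 1)))

def cylinder (p : List (Vertex b)) : Set (ℕ → Vertex b) :=
  {f | ∀ k < p.length, f k = p.getD k []}

lemma measurableSet_cylinder (p : List (Vertex b)) : MeasurableSet (cylinder p) := by
  have : cylinder p =
      ⋂ k ∈ Finset.range p.length, (fun f : ℕ → Vertex b => f k) ⁻¹' {p.getD k []} := by
    ext f; simp [cylinder]
  rw [this]
  exact Finset.measurableSet_biInter _ fun k _ => measurable_pi_apply k trivial

lemma prefix_of_mem_cylinder {f : ℕ → Vertex b} (hf : f ∈ cylinder p)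
    (hf' : f ∈ cylinder p') (h : p.length ≤ p'.length) : p <+: p' := by
  rw [List.prefix_iff_eq_take]
  refine List.ext_getElem (by simp [h]) fun k hk hk' => ?_
  have hk'' : k < p'.length := by omega
  have := (hf k hk).symm.trans (hf' k hk'')
  rw [List.getD_eq_getElem _ _ hk, List.getD_eq_getElem _ _ hk''] at this
  rw [this, List.getElem_take]

lemma IsMarkovChainLaw.measure_cylinder {x₀ : Vertex b} {μ : Measure (ℕ → Vertex b)}
    (hμ : IsMarkovChainLaw E x₀ μ) (q : List (Vertex b)) :
    μ (cylinder (x₀ :: q)) = ENNReal.ofReal (pathWeight E (x₀ :: q)) := by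
  have : cylinder (x₀ :: q) = {f | ∀ k ≤ q.length, f k = (x₀ :: q).getD k []} := by
    ext f; simp only [cylinder, List.length_cons, Set.mem_ofPred_eq, Nat.lt_succ_iff]
  rw [this, hμ]
  simp [pathWeight]

lemma cylinder_subset_rhoEvent (hn : 1 ≤ n) (hp : p ∈ escapePaths n t []) :
    cylinder p ⊆ rhoEvent b n := by
  intro f hf
  have hlast := length_getLast_of_mem_escapePaths hp (Nat.zero_le n)
  obtain ⟨q, rfl⟩ := exists_eq_cons_of_mem_escapePaths hp
  have hq : q ≠ [] := by rintro rfl; simp at hlast; omega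
  have hql := List.length_pos_iff.2 hq
  refine ⟨q.length, hql, ?_, fun j hj hjq => ?_⟩
  · rw [hf _ (by simp), List.getD_eq_getElem _ _ (by simp), ← hlast, List.getLast_eq_getElem]
    simp
  · rw [hf _ (by simp; omega), List.getD_eq_getElem _ _ (by simp; omega)]
    refine ne_nil_of_mem_tail_of_mem_escapePaths hp _ ?_
    obtain ⟨j, rfl⟩ := Nat.exists_eq_add_of_le' hj
    simp

lemma IsEllipticKernel.escapeProb_nil_le_measure (hE : IsEllipticKernel E ε)
    {μ : Measure (ℕ → Vertex b)} [IsFiniteMeasure μ]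
    (hμ : IsMarkovChainLaw E [] μ)
    (hn : 1 ≤ n) (t : ℕ) : escapeProb E n t [] ≤ (μ (rhoEvent b n)).toReal := by
  rw [← sum_pathWeight_escapePaths, ← ENNReal.ofReal_le_iff_le_toReal (measure_ne_top _ _),
    ENNReal.ofReal_sum_of_nonneg fun p _ => hE.pathWeight_nonneg p]
  calc ∑ p ∈ escapePaths n t [], ENNReal.ofReal (pathWeight E p)
      = ∑ p ∈ escapePaths n t [], μ (cylinder p) := by
        refine Finset.sum_congr rfl fun p hp => ?_
        obtain ⟨q, rfl⟩ := exists_eq_cons_of_mem_escapePaths hp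
        rw [hμ.measure_cylinder]
    _ = μ (⋃ p ∈ escapePaths n t [], cylinder p) := by
        refine (measure_biUnion_finset (fun p hp p' hp' hne => ?_)
          fun p _ => measurableSet_cylinder p).symm
        refine Set.disjoint_left.2 fun f hf hf' => hne ?_
        rcases le_total p.length p'.length with h | h
        · exact eq_of_prefix_of_mem_escapePaths hp hp' (prefix_of_mem_cylinder hf hf' h)
        · exact (eq_of_prefix_of_mem_escapePaths hp' hp (prefix_of_mem_cylinder hf' hf h)).symm
    _ ≤ μ (rhoEvent b n) :=
        measure_mono (Set.iUnion₂_subset fun p hp => cylinder_subset_rhoEvent hn hp)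

end PathMeasure

section EscapeBound

variable {b : ℕ} {E : Vertex b → Vertex b → ℝ} {ε : ℝ} {n : ℕ}

lemma IsEllipticKernel.mul_escapeProb_le_escapeProb_succ_nil (hE : IsEllipticKernel E ε)
    (hn : 1 ≤ n) (t : ℕ) (i : Fin b) :
    E [] [i] * escapeProb E n t [i] ≤ escapeProb E n (t + 1) [] := by
  rw [escapeProb, if_neg (by simp; omega), transOp, List.tail_nil, if_pos rfl, mul_zero, zero_add]
  simp only [List.cons_ne_nil, if_false]
  exact Finset.single_le_sum (f := fun j : Fin b => E [] [j] * escapeProb E n t [j])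
    (fun j _ => mul_nonneg (hE.nonneg _ _) (hE.escapeProb_nonneg t [j])) (Finset.mem_univ i)

theorem IsEllipticKernel.mul_rayScale_one_le_measure (hE : IsEllipticKernel E ε)
    {μ : Measure (ℕ → Vertex b)} [IsFiniteMeasure μ]
    (hμ : IsMarkovChainLaw E [] μ)
    {r : Vertex b} (hr : r.length = n) (hn : 1 ≤ n) :
    ε * rayScale E r 1 ≤ (μ (rhoEvent b n)).toReal := by
  have hr1 : 1 ≤ r.length := hr ▸ hn
  obtain ⟨i, hz⟩ : ∃ i : Fin b, r.rtake 1 = [i] :=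
    ⟨_, by simpa using rtake_succ (r := r) (k := 0) (by omega)⟩
  have hδ : 0 ≤ 1 - ε ^ n := sub_nonneg.2 (pow_le_one₀ hE.pos.le hE.le_one)
  have hδ1 : 1 - ε ^ n < 1 := sub_lt_self 1 (pow_pos hE.pos n)
  have key (m : ℕ) :
      E [] [i] * (rayScale E r 1 - (1 - ε ^ n) ^ m) ≤ (μ (rhoEvent b n)).toReal := by
    have hcomp := hE.rayScaleExt_le_escapeProb_add_survivalProb hr hn (m * n) [i]
    rw [← hz, hE.rayScaleExt_rtake hr1 hr1, hz] at hcomp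
    have hsurv := hE.survivalProb_mul_le (n := n) m [i]
    calc E [] [i] * (rayScale E r 1 - (1 - ε ^ n) ^ m)
        ≤ E [] [i] * escapeProb E n (m * n) [i] :=
          mul_le_mul_of_nonneg_left (by linarith) (hE.nonneg _ _)
      _ ≤ escapeProb E n (m * n + 1) [] := hE.mul_escapeProb_le_escapeProb_succ_nil hn _ i
      _ ≤ (μ (rhoEvent b n)).toReal := hE.escapeProb_nil_le_measure hμ hn _
  have hlim := ((tendsto_pow_atTop_nhds_zero_of_lt_one hδ hδ1).const_sub
    (rayScale E r 1)).const_mul (E [] [i])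
  rw [sub_zero] at hlim
  exact (mul_le_mul_of_nonneg_right (hE.le_child [] i) (hE.rayScale_mem_Icc hr1 hr1).1).trans
    (le_of_tendsto' hlim key)

end EscapeBound

namespace Setup

variable {b : ℕ} {Ω : Type*} [MeasurableSpace Ω] {P : Measure Ω} (S : Setup b Ω P) (ω : Ω)
  {r : Vertex b} {j n : ℕ}

lemma isEllipticKernel : IsEllipticKernel (S.env ω) S.ε0 where
  pos := S.ε0_pos
  nonneg := S.env_nonneg ω
  sum_root := S.env_sum_root ω
  sum_eq_one := S.env_sum ω
  le_child v i := S.env_elliptic ω v (i :: v) (Or.inl ⟨i, rfl⟩)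
  le_parent v hv :=
    S.env_elliptic ω v v.tail (Or.inr ⟨v.head hv, (List.cons_head_tail hv).symm⟩)

lemma A_pos {v : Vertex b} (hv : v ≠ []) : 0 < S.A ω v :=
  S.ε0_pos.trans_le (S.A_bdd ω v hv).1

lemma V_rtake_one (hr : 1 ≤ r.length) :
    S.V ω (r.rtake 1) = -Real.log (S.A ω (r.rtake 1)) := by
  simp [Setup.V, length_rtake_of_le hr]

lemma V_rtake_succ (hj : j + 2 ≤ r.length) :
    S.V ω (r.rtake (j + 2)) = S.V ω (r.rtake (j + 1)) - Real.log (S.A ω (r.rtake (j + 2))) := by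
  simp only [Setup.V, length_rtake_of_le hj, length_rtake_of_le (show j + 1 ≤ r.length by omega)]
  rw [Finset.sum_range_succ', List.drop_zero]
  have hdrop : ∀ k ∈ Finset.range (j + 1), Real.log (S.A ω ((r.rtake (j + 2)).drop (k + 1))) =
      Real.log (S.A ω ((r.rtake (j + 1)).drop k)) := fun k hk => by
    rw [Finset.mem_range] at hk
    rw [drop_rtake hj (by omega), drop_rtake (by omega) (by omega)]
    congr 3
    omega
  rw [Finset.sum_congr rfl hdrop]
  ring

lemma env_div_env_rtake (hj : j + 2 ≤ r.length) :
    S.env ω (r.rtake (j + 1)) (r.rtake j) / S.env ω (r.rtake (j + 1)) (r.rtake (j + 2)) =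
      (S.A ω (r.rtake (j + 2)))⁻¹ := by
  rw [rtake_succ (k := j + 1) (by omega), S.A_def ω _ _ (rtake_ne_nil (by omega)),
    tail_rtake (by omega), ← rtake_succ (by omega), Nat.add_sub_cancel, inv_div]

lemma rayRatio_eq (hj : j + 1 ≤ r.length) :
    rayRatio (S.env ω) r j = S.A ω (r.rtake 1) * Real.exp (S.V ω (r.rtake (j + 1))) := by
  induction j with
  | zero =>
    rw [S.V_rtake_one ω hj, Real.exp_neg, Real.exp_log (S.A_pos ω (rtake_ne_nil hj)),
      mul_inv_cancel₀ (S.A_pos ω (rtake_ne_nil hj)).ne']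
    simp [rayRatio]
  | succ j ih =>
    rw [rayRatio_succ, ih (by omega), S.env_div_env_rtake ω hj, S.V_rtake_succ ω hj,
      Real.exp_sub, Real.exp_log (S.A_pos ω (rtake_ne_nil hj))]
    ring

lemma V_rtake_le_Vbar (hj : j + 1 ≤ r.length) : S.V ω (r.rtake (j + 1)) ≤ S.Vbar ω r :=
  le_ciSup (f := fun k : Fin r.length => S.V ω (r.drop k)) (Set.finite_range _).bddAbove
    ⟨r.length - (j + 1), by omega⟩

lemma rayRatio_le (hj : j + 1 ≤ r.length) :
    rayRatio (S.env ω) r j ≤ Real.exp (S.Vbar ω r) / S.ε0 := by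
  rw [S.rayRatio_eq ω hj, div_eq_inv_mul, ← one_div]
  have := S.ε0_pos
  exact mul_le_mul (S.A_bdd ω _ (rtake_ne_nil (r := r) (by omega))).2
    (Real.exp_le_exp.2 (S.V_rtake_le_Vbar ω hj)) (Real.exp_pos _).le (by positivity)

lemma le_rayScale_one (hr : r.length = n) (hn : 1 ≤ n) :
    S.ε0 * Real.exp (-S.Vbar ω r) / n ≤ rayScale (S.env ω) r 1 := by
  have hZ := (S.isEllipticKernel ω).sum_rayRatio_pos (r := r) (by omega)
  have hsum : ∑ j ∈ Finset.range r.length, rayRatio (S.env ω) r j ≤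
      n * (Real.exp (S.Vbar ω r) / S.ε0) := by
    simpa [hr] using Finset.sum_le_sum (s := Finset.range r.length) fun j hj =>
      S.rayRatio_le ω (r := r) (j := j) (by rw [Finset.mem_range] at hj; omega)
  rw [rayScale, Finset.sum_range_one, div_le_div_iff₀ (by positivity) hZ]
  calc S.ε0 * Real.exp (-S.Vbar ω r) * ∑ j ∈ Finset.range r.length, rayRatio (S.env ω) r j
      ≤ S.ε0 * Real.exp (-S.Vbar ω r) * (n * (Real.exp (S.Vbar ω r) / S.ε0)) :=
        mul_le_mul_of_nonneg_left hsum (by have := S.ε0_pos; positivity)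
    _ = rayRatio (S.env ω) r 0 * n := by
        have := S.ε0_pos.ne'
        field_simp
        simp [rayRatio, Real.exp_neg]

lemma le_rho (hr : r.length = n) (hn : 1 ≤ n) :
    S.ε0 ^ 2 / n * Real.exp (-S.Vbar ω r) ≤ S.rho ω n := by
  have hE := S.isEllipticKernel ω
  have := S.Pw_prob ω []
  calc S.ε0 ^ 2 / n * Real.exp (-S.Vbar ω r) = S.ε0 * (S.ε0 * Real.exp (-S.Vbar ω r) / n) := by
        ring
    _ ≤ S.ε0 * rayScale (S.env ω) r 1 :=
        mul_le_mul_of_nonneg_left (S.le_rayScale_one ω hr hn) S.ε0_pos.le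
    _ ≤ S.rho ω n := hE.mul_rayScale_one_le_measure (S.Pw_cyl ω []) hr hn

end Setup

theorem rho_lower_bound_general {b : ℕ} {Ω : Type*} [MeasurableSpace Ω]
    (P : Measure Ω) (S : Setup b Ω P) :
    ∃ c₁₀ : ℝ, 0 < c₁₀ ∧
      ∀ᵐ ω ∂P, ∀ n : ℕ, 1 ≤ n →
        c₁₀ / n * Real.exp (-S.minVbar ω n) ≤ S.rho ω n := by
  refine ⟨S.ε0 ^ 2, pow_pos S.ε0_pos 2, Eventually.of_forall fun ω n hn => ?_⟩
  have : Nonempty (Fin n → Fin b) := ⟨fun _ => ⟨0, (S.isEllipticKernel ω).b_pos⟩⟩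
  obtain ⟨g, hg⟩ := Finite.exists_min fun g : Fin n → Fin b => S.Vbar ω (List.ofFn g)
  refine le_trans ?_ (S.le_rho ω (List.length_ofFn (f := g)) hn)
  gcongr
  exact le_ciInf hg

/-- Proposition 2.5 of Hu–Shi: if the walk is recurrent, there is a constant `c₁₀ > 0`
such that for every `n ≥ 1`, `ϱ_n ≥ (c₁₀/n) exp(-min_{x∈𝕋_n} V̄(x))`. -/
theorem rho_lower_bound {b : ℕ} (hb : 2 ≤ b) {Ω : Type*} [MeasurableSpace Ω]
    (P : Measure Ω) [IsProbabilityMeasure P] (S : Setup b Ω P)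
    (hrec : S.Recurrent) :
    ∃ c₁₀ : ℝ, 0 < c₁₀ ∧
      ∀ᵐ ω ∂P, ∀ n : ℕ, 1 ≤ n →
        c₁₀ / n * Real.exp (-S.minVbar ω n) ≤ S.rho ω n :=
  rho_lower_bound_general P S

end RWRE
end
end

section
/- For any finite collection of nonnegative random variables η₀, η₁, …, η_n (on a common probability space) and any λ ≥ 0, ∏_{j=0}^{n} 𝐄(e^{−η_j}) ≤ e^{−λ} + ∏_{j=0}^{n} 𝐏{η_j < λ}. -/
/-!
Split each expectation according to whether `ηⱼ < λ`: since `e^{-ηⱼ} ≤ 1` always and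
`e^{-ηⱼ} ≤ e^{-λ}` off that event, `𝐄 e^{-ηⱼ} ≤ ε + (1 - ε) pⱼ` with `ε = e^{-λ}` and
`pⱼ = 𝐏{ηⱼ < λ}`. A product of such convex combinations of `1` and `pⱼ` is at most the
same convex combination of `1` and `∏ pⱼ`, which is at most `ε + ∏ pⱼ`.
-/

open MeasureTheory

lemma add_mul_mul_add_mul_le {ε a b : ℝ} (hε₀ : 0 ≤ ε) (hε₁ : ε ≤ 1) (ha₁ : a ≤ 1)
    (hb₁ : b ≤ 1) :
    (ε + (1 - ε) * a) * (ε + (1 - ε) * b) ≤ ε + (1 - ε) * (a * b) := by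
  -- the difference is `ε (1 - ε) (1 - a) (1 - b)`
  nlinarith [mul_nonneg (mul_nonneg hε₀ (sub_nonneg.2 hε₁))
    (mul_nonneg (sub_nonneg.2 ha₁) (sub_nonneg.2 hb₁))]

lemma Finset.prod_add_mul_le {ι : Type*} (s : Finset ι) {p : ι → ℝ} {ε : ℝ}
    (hε₀ : 0 ≤ ε) (hε₁ : ε ≤ 1) (hp₀ : ∀ j ∈ s, 0 ≤ p j) (hp₁ : ∀ j ∈ s, p j ≤ 1) :
    ∏ j ∈ s, (ε + (1 - ε) * p j) ≤ ε + (1 - ε) * ∏ j ∈ s, p j := by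
  classical
  induction s using Finset.induction_on with
  | empty => simp
  | insert a s ha ih =>
    simp only [Finset.mem_insert, forall_eq_or_imp] at hp₀ hp₁
    rw [Finset.prod_insert ha, Finset.prod_insert ha]
    calc (ε + (1 - ε) * p a) * ∏ j ∈ s, (ε + (1 - ε) * p j)
        ≤ (ε + (1 - ε) * p a) * (ε + (1 - ε) * ∏ j ∈ s, p j) := by
          gcongr
          · nlinarith [hp₀.1]
          · exact ih hp₀.2 hp₁.2
      _ ≤ ε + (1 - ε) * (p a * ∏ j ∈ s, p j) :=
          add_mul_mul_add_mul_le hε₀ hε₁ hp₁.1 (Finset.prod_le_one hp₀.2 hp₁.2)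

lemma integral_exp_neg_le {Ω : Type*} [MeasurableSpace Ω] (P : Measure Ω)
    [IsProbabilityMeasure P] {f : Ω → ℝ} (hf : Measurable f) (hf₀ : ∀ ω, 0 ≤ f ω) (lam : ℝ) :
    ∫ ω, Real.exp (-f ω) ∂P
      ≤ Real.exp (-lam) + (1 - Real.exp (-lam)) * P.real {ω | f ω < lam} := by
  set A := {ω | f ω < lam}
  have hA : MeasurableSet A := measurableSet_lt hf measurable_const
  have hexp_le_one (ω : Ω) : Real.exp (-f ω) ≤ 1 :=
    Real.exp_le_one_iff.2 (neg_nonpos.2 (hf₀ ω))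
  have hpointwise (ω : Ω) :
      Real.exp (-f ω) ≤ A.indicator (fun _ ↦ 1 - Real.exp (-lam)) ω + Real.exp (-lam) := by
    by_cases hω : ω ∈ A
    · rw [Set.indicator_of_mem hω, sub_add_cancel]
      exact hexp_le_one ω
    · rw [Set.indicator_of_notMem hω, zero_add, Real.exp_le_exp, neg_le_neg_iff]
      exact not_lt.1 hω
  have hint : Integrable (fun ω ↦ Real.exp (-f ω)) P :=
    .of_bound hf.neg.exp.aestronglyMeasurable 1 (.of_forall fun ω ↦ by
      rw [Real.norm_of_nonneg (Real.exp_nonneg _)]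
      exact hexp_le_one ω)
  have hint_ind := (integrable_const (μ := P) (1 - Real.exp (-lam))).indicator hA
  calc ∫ ω, Real.exp (-f ω) ∂P
      ≤ ∫ ω, (A.indicator (fun _ ↦ 1 - Real.exp (-lam)) ω + Real.exp (-lam)) ∂P :=
        integral_mono hint (hint_ind.add (integrable_const _)) hpointwise
    _ = Real.exp (-lam) + (1 - Real.exp (-lam)) * P.real A := by
        rw [integral_add hint_ind (integrable_const _), integral_indicator_const _ hA,
          integral_const, probReal_univ, smul_eq_mul, smul_eq_mul, one_mul]
        ring

/-- For any nonnegative random variables `η₀, …, η_n` and any `λ ≥ 0`,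
`∏ⱼ 𝐄(e^{-ηⱼ}) ≤ e^{-λ} + ∏ⱼ 𝐏{ηⱼ < λ}` (Section 5 of Hu–Shi). -/
theorem prod_laplace_le {Ω : Type*} [MeasurableSpace Ω] (P : Measure Ω)
    [IsProbabilityMeasure P] (n : ℕ) (η : Fin (n + 1) → Ω → ℝ)
    (hmeas : ∀ j, Measurable (η j)) (hnonneg : ∀ j ω, 0 ≤ η j ω)
    (lam : ℝ) (hlam : 0 ≤ lam) :
    (∏ j : Fin (n + 1), ∫ ω, Real.exp (-η j ω) ∂P)
      ≤ Real.exp (-lam) + ∏ j : Fin (n + 1), (P {ω | η j ω < lam}).toReal := by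
  set ε := Real.exp (-lam)
  set p : Fin (n + 1) → ℝ := fun j ↦ P.real {ω | η j ω < lam}
  have hε₀ : 0 ≤ ε := Real.exp_nonneg _
  have hε₁ : ε ≤ 1 := Real.exp_le_one_iff.2 (neg_nonpos.2 hlam)
  have hp₀ : 0 ≤ ∏ j, p j := Finset.prod_nonneg fun j _ ↦ measureReal_nonneg
  calc (∏ j, ∫ ω, Real.exp (-η j ω) ∂P)
      ≤ ∏ j, (ε + (1 - ε) * p j) :=
        Finset.prod_le_prod (fun j _ ↦ integral_nonneg fun ω ↦ Real.exp_nonneg _)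
          fun j _ ↦ integral_exp_neg_le P (hmeas j) (hnonneg j) lam
    _ ≤ ε + (1 - ε) * ∏ j, p j :=
        Finset.univ.prod_add_mul_le hε₀ hε₁ (fun _ _ ↦ measureReal_nonneg)
          fun _ _ ↦ measureReal_le_one
    _ ≤ ε + ∏ j, p j := by
        gcongr
        exact mul_le_of_le_one_left hp₀ (by linarith)
end
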